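/- arXiv:1102.0552 — 2 statements merged into one kernel-verified Lean document; each statement's English description precedes it below -/
import Mathlib

section
/- Let G be a graph, ω an end of G, and S a set of exactly k vertices each of which dominates ω. Then G contains a subdivision of the complete graph K_k whose branching vertices are precisely the vertices of S. -/
open scoped ENNReal

namespace Paper

variable {V : Type*} {W : Type*}

/-- Reachability in `G` by a walk avoiding the vertex set `S`. -/
def ReachAvoid (G : SimpleGraph V) (S : Set V) (u v : V) : Prop :=
  ∃ p : G.Walk u v, ∀ x ∈ p.support, x ∉ S

/-- A ray (one-way infinite path) in `G`. -/
structure IsRay (G : SimpleGraph V) (f : ℕ → V) : Prop where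
  inj : Function.Injective f
  adj : ∀ n, G.Adj (f n) (f (n + 1))

/-- Two rays are equivalent (belong to the same end) if no finite vertex set
separates them: for every finite `S` some vertex of the first ray can be joined
to some vertex of the second by a walk avoiding `S`. -/
def EquivRay (G : SimpleGraph V) (f g : ℕ → V) : Prop :=
  ∀ S : Set V, S.Finite → ∃ m n, ReachAvoid G S (f m) (g n)

/-- The set of ends of `G`: rays modulo equivalence. -/
def Ends (G : SimpleGraph V) :=
  Quot (fun f g : {f : ℕ → V // IsRay G f} => EquivRay G f.1 g.1)

/-- `v` dominates the ray `f`: there are infinitely many `v`–`V(f)` paths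
pairwise disjoint except in `v`. -/
def DominatesRay (G : SimpleGraph V) (v : V) (f : ℕ → V) : Prop :=
  ∃ (g : ℕ → ℕ) (p : ∀ n, G.Walk v (f (g n))),
    Function.Injective g ∧ (∀ n, (p n).IsPath) ∧
    ∀ m n, m ≠ n → ∀ x ∈ (p m).support, x ∈ (p n).support → x = v

/-- The set of vertices dominating the end of the ray `r`. -/
def Dom (G : SimpleGraph V) (r : ℕ → V) : Set V := {v | DominatesRay G v r}

/-- Vertex-boundary of the vertex set `A`. -/
def vBoundary (G : SimpleGraph V) (A : Set V) : Set V :=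
  {x | x ∈ A ∧ ∃ y, y ∉ A ∧ G.Adj x y}

/-- Edge-boundary of the vertex set `A`. -/
def eBoundary (G : SimpleGraph V) (A : Set V) : Set (Sym2 V) :=
  {e | ∃ x y, x ∈ A ∧ y ∉ A ∧ G.Adj x y ∧ e = s(x, y)}

/-- `S` is a `V'`–`Ω(A)` separator: `V' ⊄ S` and no component of `G - S`
contains both a vertex of `V'` and (the tail of) a ray lying in `A`. -/
def SepVertsEndsIn (G : SimpleGraph V) (V' S A : Set V) : Prop :=
  ¬ V' ⊆ S ∧ ∀ v ∈ V', ∀ f : ℕ → V, IsRay G f → Set.range f ⊆ A →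
    ∀ n, (∀ m, n ≤ m → f m ∉ S) → ¬ ReachAvoid G S v (f n)

/-- `S` is an inclusion-minimal `V'`–`Ω(A)` separator. -/
def MinSepVertsEndsIn (G : SimpleGraph V) (V' S A : Set V) : Prop :=
  SepVertsEndsIn G V' S A ∧ ∀ S' ⊂ S, ¬ SepVertsEndsIn G V' S' A

/-- The graph `G_ω`: `G` minus the dominating vertices of the end of `r`. -/
def Gmin (G : SimpleGraph V) (r : ℕ → V) : SimpleGraph ((Dom G r)ᶜ : Set V) :=
  G.induce ((Dom G r)ᶜ : Set V)

/-- A ray of `G_ω` belonging to (the unique end `ω̂` induced by) the end `ω` of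
the ray `r`. -/
def InDeletedEnd (G : SimpleGraph V) (r : ℕ → V)
    (f : ℕ → ((Dom G r)ᶜ : Set V)) : Prop :=
  IsRay (Gmin G r) f ∧ EquivRay G (fun n => (f n : V)) r

/-- An `ω̂`-region of `G_ω`: induced connected, finite vertex-boundary,
containing a ray of `ω̂`. -/
def IsOmegaRegion (G : SimpleGraph V) (r : ℕ → V)
    (A : Set ((Dom G r)ᶜ : Set V)) : Prop :=
  ((Gmin G r).induce A).Connected ∧ (vBoundary (Gmin G r) A).Finite ∧
    ∃ f, InDeletedEnd G r f ∧ Set.range f ⊆ A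

/-- `(Ĥ_i) → ω̂` : a sequence of distinct nested `ω̂`-regions whose
vertex-boundaries are minimal separators. -/
def Converges (G : SimpleGraph V) (r : ℕ → V)
    (A : ℕ → Set ((Dom G r)ᶜ : Set V)) : Prop :=
  Function.Injective A ∧ (∀ i, IsOmegaRegion G r (A i)) ∧
    (∀ i, A (i + 1) ⊆ A i \ vBoundary (Gmin G r) (A i)) ∧
    (∀ i, MinSepVertsEndsIn (Gmin G r) (vBoundary (Gmin G r) (A i))
      (vBoundary (Gmin G r) (A (i + 1))) (A (i + 1)))

/-- The ratio `|∂_e A| / |∂_v A|`, as an extended nonnegative real. -/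
noncomputable def bratio (G : SimpleGraph V) (A : Set V) : ℝ≥0∞ :=
  ((eBoundary G A).encard : ℝ≥0∞) / ((vBoundary G A).encard : ℝ≥0∞)

open Classical in
/-- The relative degree `d_{e/v}` of the end of the ray `r`. -/
noncomputable def relDegree (G : SimpleGraph V) (r : ℕ → V) : ℝ≥0∞ :=
  if (Dom G r).Infinite ∨ ¬ ∃ f, InDeletedEnd G r f then
    ((Dom G r).encard : ℝ≥0∞)
  else
    ((Dom G r).encard : ℝ≥0∞) +
      ⨅ A : {A : ℕ → Set ((Dom G r)ᶜ : Set V) // Converges G r A},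
        Filter.atTop.liminf fun i => bratio (Gmin G r) (A.1 i)

/-- The degree of a vertex, as an extended real. -/
noncomputable def degER (G : SimpleGraph V) (v : V) : EReal :=
  (((G.neighborSet v).encard : ℝ≥0∞) : EReal)

/-- A subdivision of `K_k` in `G` with branching vertices `b 0, …, b (k-1)`. -/
def HasTKOn (G : SimpleGraph V) {k : ℕ} (b : Fin k ↪ V) : Prop :=
  ∃ p : ∀ i j : Fin k, G.Walk (b i) (b j),
    (∀ i j, i ≠ j → (p i j).IsPath) ∧
    (∀ i j, i ≠ j → ∀ x ∈ (p i j).support, x ∈ Set.range b → x = b i ∨ x = b j) ∧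
    (∀ i j i' j', i ≠ j → i' ≠ j' → s(i, j) ≠ s(i', j') →
      ∀ x ∈ (p i j).support, x ∈ (p i' j').support → x ∈ Set.range b)

/-- `K_k` is a topological minor of `G`. -/
def HasTopK (G : SimpleGraph V) (k : ℕ) : Prop :=
  ∃ b : Fin k ↪ V, HasTKOn G b

/-- A subdivision of `K_{ℵ₀}` in `G` with branching vertices `b 0, b 1, …`. -/
def HasTKInfOn (G : SimpleGraph V) (b : ℕ ↪ V) : Prop :=
  ∃ p : ∀ i j : ℕ, G.Walk (b i) (b j),
    (∀ i j, i ≠ j → (p i j).IsPath) ∧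
    (∀ i j, i ≠ j → ∀ x ∈ (p i j).support, x ∈ Set.range b → x = b i ∨ x = b j) ∧
    (∀ i j i' j', i ≠ j → i' ≠ j' → s(i, j) ≠ s(i', j') →
      ∀ x ∈ (p i j).support, x ∈ (p i' j').support → x ∈ Set.range b)

/-- `K_k` is a minor of `G` (with finite branch sets). -/
def HasKMinor (G : SimpleGraph V) (k : ℕ) : Prop :=
  ∃ B : Fin k → Finset V,
    (∀ i, (B i).Nonempty) ∧ (∀ i j, i ≠ j → Disjoint (B i) (B j)) ∧
    (∀ i, (G.induce (B i : Set V)).Connected) ∧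
    (∀ i j, i ≠ j → ∃ x ∈ B i, ∃ y ∈ B j, G.Adj x y)

/-- The average degree of the finite induced subgraph of `G` on `s`. -/
noncomputable def avgDegOn (G : SimpleGraph V) (s : Finset V) : ℝ :=
  (∑ v ∈ s, ((G.neighborSet v ∩ ↑s).ncard : ℝ)) / s.card

/-- `G` is rayless. -/
def Rayless (G : SimpleGraph V) : Prop := ¬ ∃ f : ℕ → V, IsRay G f

/-- The average degree of the vertex set `F` into `A` in `G`. -/
noncomputable def avgDegIn (G : SimpleGraph V) (A F : Set V) : ℝ :=
  (∑ᶠ v ∈ F, ((G.neighborSet v ∩ A).ncard : ℝ)) / F.ncard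

/-
Two vertices dominating the same end cannot be separated by finitely many other vertices:
each has a fan path to the tail of the ray beyond any finite set avoiding it, and that tail
is connected. Hence the branch paths between the vertices of `S` can be chosen one after
another, each avoiding the finitely many vertices used by the earlier ones and the other
branch vertices.
-/

open SimpleGraph

section ReachAvoid

variable {G : SimpleGraph V} {X : Set V} {u v w : V}

lemma ReachAvoid.refl (hu : u ∉ X) : ReachAvoid G X u u :=
  ⟨.nil, by simpa using hu⟩

lemma ReachAvoid.of_adj (h : G.Adj u v) (hu : u ∉ X) (hv : v ∉ X) : ReachAvoid G X u v :=
  ⟨h.toWalk, by simp [h.support_toWalk, hu, hv]⟩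

lemma ReachAvoid.symm : ReachAvoid G X u v → ReachAvoid G X v u
  | ⟨p, hp⟩ => ⟨p.reverse, by simpa using hp⟩

lemma ReachAvoid.trans : ReachAvoid G X u v → ReachAvoid G X v w → ReachAvoid G X u w
  | ⟨p, hp⟩, ⟨q, hq⟩ => ⟨p.append q, by simp only [Walk.mem_support_append_iff]; grind⟩

lemma ReachAvoid.exists_isPath (h : ReachAvoid G X u v) :
    ∃ p : G.Walk u v, p.IsPath ∧ ∀ x ∈ p.support, x ∉ X := by
  classical
  obtain ⟨p, hp⟩ := h
  exact ⟨p.bypass, p.bypass_isPath, fun x hx => hp x (p.support_bypass_subset_support hx)⟩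

end ReachAvoid

def FinitelyInseparable (G : SimpleGraph V) (B : Set V) : Prop :=
  ∀ u ∈ B, ∀ v ∈ B, ∀ X : Set V, X.Finite → u ∉ X → v ∉ X → ReachAvoid G X u v

section Ray

variable {G : SimpleGraph V} {r : ℕ → V} {X : Set V} {u : V}

lemma IsRay.exists_notMem_of_lt (hr : IsRay G r) (hX : X.Finite) :
    ∃ N, ∀ m, N < m → r m ∉ X := by
  obtain ⟨N, hN⟩ := (hX.preimage hr.inj.injOn).bddAbove
  exact ⟨N, fun m hm hmX => (hN hmX).not_gt hm⟩

lemma IsRay.reachAvoid_of_tail (hr : IsRay G r) {N : ℕ} (hX : ∀ m, N < m → r m ∉ X)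
    {a c : ℕ} (ha : N < a) (hc : N < c) : ReachAvoid G X (r a) (r c) := by
  wlog hac : a ≤ c generalizing a c
  · exact (this hc ha (le_of_not_ge hac)).symm
  induction c, hac using Nat.le_induction with
  | base => exact .refl (hX a ha)
  | succ c hac ih =>
    exact (ih (by omega)).trans (.of_adj (hr.adj c) (hX c (by omega)) (hX (c + 1) hc))

/-- Of the infinitely many fan paths, only finitely many meet the finite set `X` (they are
disjoint away from `u`), and only finitely many end at `r m` with `m ≤ N`. -/
lemma DominatesRay.exists_reachAvoid (hu : DominatesRay G u r) (hX : X.Finite) (huX : u ∉ X)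
    (N : ℕ) : ∃ m, N < m ∧ ReachAvoid G X u (r m) := by
  obtain ⟨g, p, hg, -, hdisj⟩ := hu
  have hmeet : {n | ∃ x ∈ X, x ∈ (p n).support}.Finite := by
    refine (hX.biUnion fun x hx => Set.Subsingleton.finite ?_).subset
      fun n ⟨x, hx, hxn⟩ => Set.mem_biUnion hx hxn
    intro m hm n hn
    by_contra hmn
    exact huX (hdisj m n hmn x hm hn ▸ hx)
  have hsmall : {n | g n ≤ N}.Finite := (Set.finite_Iic N).preimage hg.injOn
  obtain ⟨n, hn⟩ := (hmeet.union hsmall).infinite_compl.nonempty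
  simp only [Set.mem_compl_iff, Set.mem_union, Set.mem_ofPred_eq, not_or, not_exists, not_and,
    not_le] at hn
  exact ⟨g n, hn.2, p n, fun x hx hxX => hn.1 x hxX hx⟩

/-- Both vertices reach the tail of the ray beyond `X`, and that tail is connected. -/
lemma IsRay.finitelyInseparable (hr : IsRay G r) {B : Set V}
    (hB : ∀ v ∈ B, DominatesRay G v r) : FinitelyInseparable G B := by
  intro u hu v hv X hX huX hvX
  obtain ⟨N, hN⟩ := hr.exists_notMem_of_lt hX
  obtain ⟨a, ha, hua⟩ := (hB u hu).exists_reachAvoid hX huX N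
  obtain ⟨c, hc, hvc⟩ := (hB v hv).exists_reachAvoid hX hvX N
  exact hua.trans ((hr.reachAvoid_of_tail hN ha hc).trans hvc.symm)

end Ray

section IndependentPaths

variable {ι : Type*} {G : SimpleGraph V} {s t : ι → V} {B : Set V}

def IndependentPathsOn (G : SimpleGraph V) (s t : ι → V) (B : Set V) (T : Finset ι)
    (P : ∀ i, G.Walk (s i) (t i)) : Prop :=
  ∀ i ∈ T, (P i).IsPath ∧ (∀ x ∈ (P i).support, x ∈ B → x = s i ∨ x = t i) ∧
    ∀ j ∈ T, j ≠ i → ∀ x ∈ (P i).support, x ∈ (P j).support → x ∈ B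

lemma IndependentPathsOn.update [DecidableEq ι] {T : Finset ι} {P : ∀ i, G.Walk (s i) (t i)}
    (hP : IndependentPathsOn G s t B T P) {i : ι} (hi : i ∉ T) (p : G.Walk (s i) (t i))
    (hp : p.IsPath) (hpB : ∀ x ∈ p.support, x ∈ B → x = s i ∨ x = t i)
    (hpP : ∀ j ∈ T, ∀ x ∈ p.support, x ∈ (P j).support → x ∈ B) :
    IndependentPathsOn G s t B (insert i T) (Function.update P i p) := by
  have hne {j} (hj : j ∈ T) : j ≠ i := fun h => hi (h ▸ hj)
  intro j hj
  rcases Finset.mem_insert.1 hj with rfl | hjT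
  · refine ⟨by rwa [Function.update_self], by rwa [Function.update_self], ?_⟩
    intro l hl hlj x hx hxl
    rw [Function.update_self] at hx
    rw [Function.update_of_ne hlj] at hxl
    exact hpP l ((Finset.mem_insert.1 hl).resolve_left hlj) x hx hxl
  · obtain ⟨hPj, hPjB, hPjP⟩ := hP j hjT
    rw [Function.update_of_ne (hne hjT)]
    refine ⟨hPj, hPjB, fun l hl hlj x hx hxl => ?_⟩
    rcases Finset.mem_insert.1 hl with rfl | hlT
    · rw [Function.update_self] at hxl
      exact hpP j hjT x hxl hx
    · rw [Function.update_of_ne (hne hlT)] at hxl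
      exact hPjP l hlT hlj x hx hxl

/-- Greedy construction: each new path avoids the finitely many vertices already used by
the earlier paths and by `B`, apart from its own ends. -/
theorem FinitelyInseparable.exists_independentPathsOn (hconn : FinitelyInseparable G B)
    (hB : B.Finite) (hsB : ∀ i, s i ∈ B) (htB : ∀ i, t i ∈ B) (T : Finset ι) :
    ∃ P, IndependentPathsOn G s t B T P := by
  classical
  induction T using Finset.induction with
  | empty =>
    exact ⟨fun i => (hconn _ (hsB i) _ (htB i) ∅ Set.finite_empty (by simp) (by simp)).choose,
      by simp [IndependentPathsOn]⟩
  | @insert i T hi ih =>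
    obtain ⟨P, hP⟩ := ih
    set X : Set V := (B ∪ ⋃ j ∈ T, {x | x ∈ (P j).support}) \ {s i, t i}
    have hX : X.Finite :=
      (hB.union (T.finite_toSet.biUnion fun j _ => (P j).support.finite_toSet)).sdiff
    obtain ⟨p, hp, hpX⟩ :=
      (hconn _ (hsB i) _ (htB i) X hX (by simp [X]) (by simp [X])).exists_isPath
    have hpX' : ∀ x ∈ p.support, x ∈ B ∨ (∃ j ∈ T, x ∈ (P j).support) →
        x = s i ∨ x = t i := by
      intro x hx hxB
      by_contra hst
      exact hpX x hx ⟨by simpa using hxB, by simpa using hst⟩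
    refine ⟨_, hP.update hi p hp (fun x hx hxB => hpX' x hx (.inl hxB)) ?_⟩
    intro j hj x hx hxj
    rcases hpX' x hx (.inr ⟨j, hj, hxj⟩) with rfl | rfl
    exacts [hsB i, htB i]

end IndependentPaths

lemma hasTKOn_of_lt {G : SimpleGraph V} {k : ℕ} (b : Fin k ↪ V)
    (P : ∀ i j : Fin k, G.Walk (b i) (b j))
    (hP : IndependentPathsOn G (fun q : Fin k × Fin k => b q.1) (fun q => b q.2) (Set.range b)
      {q | q.1 < q.2} fun q => P q.1 q.2) :
    HasTKOn G b := by
  set p : ∀ i j : Fin k, G.Walk (b i) (b j) := fun i j =>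
    if i < j then P i j else (P j i).reverse
  have hsorted : ∀ i j, i ≠ j → ∃ a c, a < c ∧ s(i, j) = s(a, c) ∧ (p i j).IsPath ∧
      (∀ x, x ∈ (p i j).support ↔ x ∈ (P a c).support) := by
    intro i j hij
    rcases hij.lt_or_gt with h | h
    · refine ⟨i, j, h, rfl, ?_, fun x => ?_⟩ <;>
        simp [p, h, (hP (i, j) (by simpa using h)).1]
    · refine ⟨j, i, h, Sym2.eq_swap, ?_, fun x => ?_⟩ <;>
        simp [p, h.not_gt, (hP (j, i) (by simpa using h)).1]
  refine ⟨p, fun i j hij => ?_, ?_, ?_⟩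
  · obtain ⟨-, -, -, -, hpath, -⟩ := hsorted i j hij
    exact hpath
  · intro i j hij x hx hxb
    obtain ⟨a, c, hac, hsym, -, hmem⟩ := hsorted i j hij
    have := (hP (a, c) (by simpa using hac)).2.1 x ((hmem x).1 hx) hxb
    rcases Sym2.eq_iff.1 hsym with ⟨rfl, rfl⟩ | ⟨rfl, rfl⟩ <;> tauto
  · intro i j i' j' hij hij' hne x hx hx'
    obtain ⟨a, c, hac, hsym, -, hmem⟩ := hsorted i j hij
    obtain ⟨a', c', hac', hsym', -, hmem'⟩ := hsorted i' j' hij'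
    refine (hP (a, c) (by simpa using hac)).2.2 (a', c') (by simpa using hac') ?_ x
      ((hmem x).1 hx) ((hmem' x).1 hx')
    rintro ⟨⟩
    exact hne (hsym.trans hsym'.symm)

/-- if `S` is a set of exactly `k` vertices dominating the end of
the ray `r`, then `G` contains a subdivision of `K_k` whose branching vertices
are precisely the vertices of `S`. -/
theorem tk_with_branch_vertices (G : SimpleGraph V) (r : ℕ → V) (hr : IsRay G r)
    (k : ℕ) (S : Finset V) (hcard : S.card = k)
    (hdom : ∀ v ∈ S, DominatesRay G v r) :
    ∃ b : Fin k ↪ V, Set.range b = (S : Set V) ∧ HasTKOn G b := by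
  set b : Fin k ↪ V := (S.equivFinOfCardEq hcard).symm.toEmbedding.trans (.subtype _)
  have hb : Set.range b = S := by simp [b, Set.range_comp, Function.Embedding.trans]
  have hinsep : FinitelyInseparable G (Set.range b) :=
    hr.finitelyInseparable fun v hv => hdom v (hb.subset hv)
  obtain ⟨P, hP⟩ := hinsep.exists_independentPathsOn (s := fun q : Fin k × Fin k => b q.1)
    (t := fun q => b q.2) (Set.finite_range b) (fun _ => Set.mem_range_self _)
    (fun _ => Set.mem_range_self _) {q | q.1 < q.2}
  exact ⟨b, hb, hasTKOn_of_lt b (fun i j => P (i, j)) hP⟩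

end Paper
end

section
/- There is no function f : ℕ → ℕ such that every graph G with δ^{V,Ω}(G) ≥ f(k) contains K_k as a minor. In particular, there exists a planar graph G with every vertex of infinite degree and every end of infinite relative degree (so δ^{V,Ω}(G) = ℵ₀), which has no complete minor of order greater than 4. -/
open scoped ENNReal

namespace Paper

variable {V : Type*} {W : Type*}

/-! Instead of the paper's planar graph we use the rooted tree on `List ℕ` in which `x` is the
parent of every `a :: x`, with each vertex also joined to its grandchildren. Every vertex has
infinite degree. An edge entering the subtree below `m` (the lists with suffix `m`) must come
from the parent or the grandparent of `m`, its *gate*. A connected branch set therefore has a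
root of which all its vertices are descendants, and if `K_k` were a minor, each of the `k - 1`
branch sets other than the one with the deepest root would meet the two-element gate of that
root, so `k ≤ 3`. The same bottleneck shows that no vertex dominates a ray, since a ray
eventually stays below vertices of every depth. Finally, a region with a finite nonempty vertex-boundary
is left by some parent-child edge, and the infinitely many common neighbours of such a pair make
its edge-boundary infinite, so every end has infinite relative degree. -/

section Boundary

variable {G : SimpleGraph V} {A : Set V}

lemma bratio_eq_top (he : (eBoundary G A).Infinite) (hv : (vBoundary G A).Finite) :
    bratio G A = ⊤ := by
  rw [bratio, he.encard_eq, ENat.toENNReal_top]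
  exact ENNReal.top_div_of_ne_top (by simpa using hv.encard_lt_top.ne)

lemma eBoundary_infinite_of_commonNeighbors {u w : V} (hv : (vBoundary G A).Finite)
    (hu : u ∈ A) (hw : w ∉ A) (hinf : (G.commonNeighbors u w).Infinite) :
    (eBoundary G A).Infinite := by
  have hin : (G.commonNeighbors u w ∩ A).Finite :=
    hv.subset fun z ⟨hz, hzA⟩ => ⟨hzA, w, hw, (G.mem_commonNeighbors.1 hz).2.symm⟩
  have hout : (G.commonNeighbors u w \ A).Infinite := fun h =>
    hinf (by simpa only [Set.sdiff_union_inter] using h.union hin)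
  refine (hout.image (f := fun z => s(u, z)) fun _ _ _ _ h => Sym2.congr_right.1 h).mono ?_
  rintro _ ⟨z, ⟨hz, hzA⟩, rfl⟩
  exact ⟨u, z, hu, hzA, (G.mem_commonNeighbors.1 hz).1, rfl⟩

end Boundary

section RelDegree

variable {G : SimpleGraph V} {r : ℕ → V}

lemma exists_inDeletedEnd (hr : IsRay G r) (hD : ∀ n, r n ∉ Dom G r) :
    ∃ f, InDeletedEnd G r f := by
  refine ⟨fun n => ⟨r n, hD n⟩, ⟨fun a b h => hr.inj (congrArg Subtype.val h), hr.adj⟩,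
    fun S hS => ?_⟩
  obtain ⟨_, ⟨n, rfl⟩, hn⟩ := ((Set.infinite_range_of_injective hr.inj).sdiff hS).nonempty
  exact ⟨n, n, .nil, by simpa using hn⟩

lemma relDegree_eq_top (hD : (Dom G r).Finite) (hend : ∃ f, InDeletedEnd G r f)
    (hbd : ∀ A, (vBoundary (Gmin G r) A).Finite → (vBoundary (Gmin G r) A).Nonempty →
      (eBoundary (Gmin G r) A).Infinite) :
    relDegree G r = ⊤ := by
  rw [relDegree, if_neg (by simp [hD, hend]), iInf_eq_top.2, add_top]
  rintro ⟨A, hA⟩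
  have hfin : ∀ i, (vBoundary (Gmin G r) (A i)).Finite := fun i => (hA.2.1 i).2.1
  have hne : ∀ i, (vBoundary (Gmin G r) (A i)).Nonempty := fun i =>
    (Set.nonempty_of_not_subset (hA.2.2.2 i).1.1).mono Set.sdiff_subset
  have hbr : ∀ i, bratio (Gmin G r) (A i) = ⊤ := fun i =>
    bratio_eq_top (hbd _ (hfin i) (hne i)) (hfin i)
  simp only [hbr, Filter.liminf_const]

end RelDegree

/-- The rooted `ℕ`-branching tree on `List ℕ`, the parent of `a :: x` being `x`, with every
vertex also joined to its grandchildren. -/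
def skipTree : SimpleGraph (List ℕ) :=
  SimpleGraph.fromRel fun x y => (∃ a, y = a :: x) ∨ ∃ a b, y = a :: b :: x

lemma skipTree_adj_cons (a : ℕ) (x : List ℕ) : skipTree.Adj x (a :: x) :=
  (SimpleGraph.fromRel_adj _ _ _).2 ⟨(List.cons_ne_self a x).symm, .inl (.inl ⟨a, rfl⟩)⟩

lemma skipTree_adj_cons_cons (a b : ℕ) (x : List ℕ) : skipTree.Adj x (a :: b :: x) :=
  (SimpleGraph.fromRel_adj _ _ _).2
    ⟨fun h => absurd (congrArg List.length h) (by simp only [List.length_cons]; omega), .inl (.inr ⟨a, b, rfl⟩)⟩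

lemma skipTree_suffix_or_suffix {x y : List ℕ} (h : skipTree.Adj x y) : x <:+ y ∨ y <:+ x := by
  rcases ((SimpleGraph.fromRel_adj _ _ _).1 h).2 with
    (⟨a, rfl⟩ | ⟨a, b, rfl⟩) | (⟨a, rfl⟩ | ⟨a, b, rfl⟩)
  exacts [.inl (List.suffix_cons a x), .inl ((List.suffix_cons b x).trans (List.suffix_cons a _)),
    .inr (List.suffix_cons a y), .inr ((List.suffix_cons b y).trans (List.suffix_cons a _))]

lemma skipTree_neighborSet_infinite (v : List ℕ) : (skipTree.neighborSet v).Infinite :=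
  Set.infinite_of_injective_forall_mem (f := fun a : ℕ => a :: v)
    (fun _ _ h => (List.cons.inj h).1) (fun a => skipTree_adj_cons a v)

lemma isRay_skipTree_replicate : IsRay skipTree fun n => List.replicate n 0 :=
  ⟨fun a b h => by simpa using congrArg List.length h,
    fun n => by simpa only [List.replicate_succ] using skipTree_adj_cons 0 _⟩

section Gate

def gate (m : List ℕ) : Finset (List ℕ) := {m.tail, m.tail.tail}

lemma card_gate_le (m : List ℕ) : (gate m).card ≤ 2 := Finset.card_le_two

lemma length_eq_of_mem_gate {m z : List ℕ} (hz : z ∈ gate m) :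
    z.length = m.length - 1 ∨ z.length = m.length - 2 := by
  rcases Finset.mem_insert.1 hz with rfl | hz
  · simp
  · simp [Finset.mem_singleton.1 hz, Nat.sub_sub]

variable {m : List ℕ}

lemma skipTree_mem_gate_of_adj {x y : List ℕ} (h : skipTree.Adj x y) (hx : ¬ m <:+ x)
    (hy : m <:+ y) : x ∈ gate m := by
  rcases ((SimpleGraph.fromRel_adj _ _ _).1 h).2 with
    (⟨a, rfl⟩ | ⟨a, b, rfl⟩) | (⟨a, rfl⟩ | ⟨a, b, rfl⟩)
  · obtain rfl | h := List.suffix_cons_iff.1 hy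
    · simp [gate]
    · exact absurd h hx
  · obtain rfl | h := List.suffix_cons_iff.1 hy
    · simp [gate]
    obtain rfl | h := List.suffix_cons_iff.1 h
    · simp [gate]
    · exact absurd h hx
  · exact absurd (hy.trans (List.suffix_cons a y)) hx
  · exact absurd (hy.trans ((List.suffix_cons b y).trans (List.suffix_cons a _))) hx

lemma skipTree_exists_mem_support_gate {u v : List ℕ} (p : skipTree.Walk u v)
    (hu : ¬ m <:+ u) (hv : m <:+ v) : ∃ z ∈ p.support, z ∈ gate m := by
  induction p with
  | nil => exact absurd hv hu
  | @cons a b c h q ih =>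
    by_cases hb : m <:+ b
    · exact ⟨a, by simp, skipTree_mem_gate_of_adj h hu hb⟩
    · obtain ⟨z, hz, hzm⟩ := ih hb hv
      exact ⟨z, by simp [hz], hzm⟩

lemma skipTree_exists_mem_gate_of_connected {S : Set (List ℕ)}
    (hS : (skipTree.induce S).Connected) {u v : List ℕ} (hu : u ∈ S) (hv : v ∈ S)
    (hum : ¬ m <:+ u) (hvm : m <:+ v) : ∃ z ∈ S, z ∈ gate m := by
  obtain ⟨q⟩ := hS ⟨u, hu⟩ ⟨v, hv⟩
  obtain ⟨z, hz, hzm⟩ :=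
    skipTree_exists_mem_support_gate (q.map (SimpleGraph.Embedding.induce S).toHom) hum hvm
  rw [SimpleGraph.Walk.support_map] at hz
  obtain ⟨z, -, rfl⟩ := List.mem_map.1 hz
  exact ⟨z, z.2, hzm⟩

end Gate

lemma skipTree_exists_root {S : Finset (List ℕ)} (hne : S.Nonempty)
    (hS : (skipTree.induce (S : Set (List ℕ))).Connected) : ∃ m ∈ S, ∀ b ∈ S, m <:+ b := by
  obtain ⟨m, hm, hmin⟩ := S.exists_min_image List.length hne
  refine ⟨m, hm, fun b hb => by_contra fun hbm => ?_⟩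
  obtain ⟨z, hzS, hz⟩ := skipTree_exists_mem_gate_of_connected hS hb hm hbm (List.suffix_refl m)
  have hm0 : m ≠ [] := by rintro rfl; exact hbm b.nil_suffix
  have := hmin z hzS
  have := List.length_pos_iff.2 hm0
  rcases length_eq_of_mem_gate hz with h | h <;> omega

lemma skipTree_not_hasKMinor {k : ℕ} (hk : 3 < k) : ¬ HasKMinor skipTree k := by
  rintro ⟨B, hne, hdisj, hconn, hadj⟩
  choose root hroot_mem hroot using fun i => skipTree_exists_root (hne i) (hconn i)
  obtain ⟨i₀, -, hmax⟩ :=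
    Finset.univ.exists_max_image (fun i => (root i).length) ⟨⟨0, by omega⟩, Finset.mem_univ _⟩
  have hgate : ∀ j ≠ i₀, ∃ z ∈ B j, z ∈ gate (root i₀) := by
    intro j hj
    have hj_out : ¬ root i₀ <:+ root j := fun h =>
      Finset.disjoint_left.1 (hdisj j i₀ hj) (hroot_mem j)
        (h.eq_of_length (le_antisymm h.length_le (hmax j (Finset.mem_univ j))) ▸ hroot_mem i₀)
    obtain ⟨x, hx, y, hy, hxy⟩ := hadj j i₀ hj
    by_cases hx_in : root i₀ <:+ x
    · exact skipTree_exists_mem_gate_of_connected (hconn j) (hroot_mem j) hx hj_out hx_in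
    · exact ⟨x, hx, skipTree_mem_gate_of_adj hxy hx_in (hroot i₀ y hy)⟩
  choose! z hzB hzg using hgate
  obtain ⟨i, hi, j, hj, hij, heq⟩ :=
    Finset.exists_ne_map_eq_of_card_lt_of_maps_to (s := Finset.univ.erase i₀)
      ((card_gate_le _).trans_lt (by simp; omega))
      fun j hj => hzg j (Finset.ne_of_mem_erase hj)
  exact Finset.disjoint_left.1 (hdisj i j hij) (hzB i (Finset.ne_of_mem_erase hi))
    (heq ▸ hzB j (Finset.ne_of_mem_erase hj))

section Ray

variable {r : ℕ → List ℕ}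

/-- Adjacent vertices are comparable under `<:+`, so a walk that stays at depth `≥ K` keeps its
ancestor at depth `K`. -/
lemma skipTree_exists_suffix_of_eventually_length_ge
    (hadj : ∀ n, skipTree.Adj (r n) (r (n + 1))) {K : ℕ}
    (h : ∀ᶠ n in Filter.atTop, K ≤ (r n).length) :
    ∃ m : List ℕ, m.length = K ∧ ∀ᶠ n in Filter.atTop, m <:+ r n := by
  obtain ⟨N, hN⟩ := h.exists_forall_of_atTop
  refine ⟨(r N).drop ((r N).length - K), by simp; have := hN N le_rfl; omega,
    Filter.eventually_atTop.2 ⟨N, fun n hn => ?_⟩⟩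
  induction n, hn using Nat.le_induction with
  | base => exact List.drop_suffix _ _
  | succ n hn ih =>
    rcases skipTree_suffix_or_suffix (hadj n) with h | h
    · exact ih.trans h
    · refine List.suffix_of_suffix_length_le ih h ?_
      have := hN (n + 1) (by omega)
      simp only [List.length_drop]
      omega

variable (hr : IsRay skipTree r)
include hr

lemma skipTree_eventually_length_ge (K : ℕ) : ∀ᶠ n in Filter.atTop, K ≤ (r n).length := by
  induction K with
  | zero => exact .of_forall fun _ => Nat.zero_le _
  | succ K ih =>
    obtain ⟨m, hm, hsuf⟩ := skipTree_exists_suffix_of_eventually_length_ge hr.adj ih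
    have hne : ∀ᶠ n in Filter.atTop, r n ≠ m := by
      simpa [Nat.cofinite_eq_atTop] using
        hr.inj.tendsto_cofinite (Set.finite_singleton m).compl_mem_cofinite
    filter_upwards [ih, hsuf, hne] with n hK hmn hrn
    by_contra! hlt
    exact hrn (hmn.eq_of_length (by omega)).symm

lemma skipTree_dom_eq_empty : Dom skipTree r = ∅ := by
  refine Set.eq_empty_of_forall_notMem fun v ⟨g, p, hg, _, hdisj⟩ => ?_
  obtain ⟨m, hm, hsuf⟩ := skipTree_exists_suffix_of_eventually_length_ge hr.adj
    (skipTree_eventually_length_ge hr (v.length + 3))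
  obtain ⟨M, hM⟩ := (hg.nat_tendsto_atTop.eventually hsuf).exists_forall_of_atTop
  have hvm : ¬ m <:+ v := fun h => by have := h.length_le; omega
  choose z hzp hzg using fun i =>
    skipTree_exists_mem_support_gate (p (M + i)) hvm (hM (M + i) (by omega))
  obtain ⟨i, -, j, -, hij, heq⟩ :=
    Finset.exists_ne_map_eq_of_card_lt_of_maps_to (s := Finset.range 3)
      ((card_gate_le m).trans_lt (by simp)) fun i _ => hzg i
  have hzv : z i = v := hdisj _ _ (by omega) _ (hzp i) (heq ▸ hzp j)
  rcases length_eq_of_mem_gate (hzg i) with h | h <;> rw [hzv] at h <;> omega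

end Ray

lemma skipTree_exists_cons_crossing {A : Set (List ℕ)} {x y : List ℕ} (hxy : skipTree.Adj x y)
    (hx : x ∈ A) (hy : y ∉ A) : ∃ p a, ¬ (p ∈ A ↔ a :: p ∈ A) := by
  rcases ((SimpleGraph.fromRel_adj _ _ _).1 hxy).2 with
    (⟨a, rfl⟩ | ⟨a, b, rfl⟩) | (⟨a, rfl⟩ | ⟨a, b, rfl⟩)
  · exact ⟨x, a, by tauto⟩
  · by_cases hc : b :: x ∈ A
    exacts [⟨b :: x, a, by tauto⟩, ⟨x, b, by tauto⟩]
  · exact ⟨y, a, by tauto⟩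
  · by_cases hc : b :: y ∈ A
    exacts [⟨y, b, by tauto⟩, ⟨b :: y, a, by tauto⟩]

/-- The whole tree, seen as an induced subgraph: this is the shape in which `Gmin` presents it. -/
lemma skipTree_induce_eBoundary_infinite {s : Set (List ℕ)} (hs : ∀ x, x ∈ s) {A : Set s}
    (hfin : (vBoundary (skipTree.induce s) A).Finite)
    (hne : (vBoundary (skipTree.induce s) A).Nonempty) :
    (eBoundary (skipTree.induce s) A).Infinite := by
  obtain ⟨x, hxA, y, hyA, hxy⟩ := hne
  obtain ⟨p, a, hpa⟩ := skipTree_exists_cons_crossing (A := {x | (⟨x, hs x⟩ : s) ∈ A}) (x := x) (y := y) hxy hxA hyA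
  have hinf : ((skipTree.induce s).commonNeighbors ⟨p, hs p⟩ ⟨a :: p, hs _⟩).Infinite :=
    Set.infinite_of_injective_forall_mem (f := fun t : ℕ => ⟨t :: a :: p, hs _⟩)
      (fun _ _ h => (List.cons.inj (congrArg Subtype.val h)).1)
      fun t => ⟨skipTree_adj_cons_cons t a p, skipTree_adj_cons t (a :: p)⟩
  by_cases hp : ⟨p, hs p⟩ ∈ A
  · exact eBoundary_infinite_of_commonNeighbors hfin hp (by tauto) hinf
  · rw [SimpleGraph.commonNeighbors_symm] at hinf
    exact eBoundary_infinite_of_commonNeighbors hfin (by tauto) hp hinf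

lemma skipTree_relDegree_eq_top {r : ℕ → List ℕ} (hr : IsRay skipTree r) :
    relDegree skipTree r = ⊤ := by
  have hD : ∀ x, x ∈ (Dom skipTree r)ᶜ := by simp [skipTree_dom_eq_empty hr]
  exact relDegree_eq_top (by simp [skipTree_dom_eq_empty hr]) (exists_inDeletedEnd hr fun n => hD (r n))
    fun _ => skipTree_induce_eBoundary_infinite hD

/-- there is no function `f : ℕ → ℕ` such that `δ^{V,Ω}(G) ≥ f k`
forces a `K_k` minor in every graph; witnessed by a graph in which every vertex
has infinite degree and every end has infinite relative degree (so
`δ^{V,Ω}(G) = ℵ₀`) but which has no complete minor of order greater than `4`. -/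
theorem no_degree_function :
    (¬ ∃ f : ℕ → ℕ, ∀ (V : Type) (G : SimpleGraph V) (k : ℕ),
        (∀ v, (f k : ℕ∞) ≤ (G.neighborSet v).encard) →
        (∀ r : ℕ → V, IsRay G r → (f k : ℝ≥0∞) ≤ relDegree G r) →
        HasKMinor G k) ∧
    ∃ (V : Type) (G : SimpleGraph V),
      (∀ v : V, (G.neighborSet v).Infinite) ∧
      (∃ r : ℕ → V, IsRay G r) ∧
      (∀ r : ℕ → V, IsRay G r → relDegree G r = ⊤) ∧
      ∀ k : ℕ, 4 < k → ¬ HasKMinor G k := by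
  refine ⟨fun ⟨f, hf⟩ => skipTree_not_hasKMinor (k := 4) (by norm_num) ?_,
    List ℕ, skipTree, skipTree_neighborSet_infinite, ⟨_, isRay_skipTree_replicate⟩,
    fun _ => skipTree_relDegree_eq_top, fun k hk => skipTree_not_hasKMinor (by omega)⟩
  refine hf (List ℕ) skipTree 4 (fun v => ?_) fun r hr => ?_
  · rw [(skipTree_neighborSet_infinite v).encard_eq]; exact le_top
  · rw [skipTree_relDegree_eq_top hr]; exact le_top

end Paper
end
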